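/- Proposition 3 (equal trends comparative statics): the constrained maximizer is weakly antitone in the common trend, i.e., for all real numbers Δ and Δ' with Δ ≤ Δ', one has σ(Δ) ≥ σ(Δ'). Equivalently, when both individuals' trend parameter Δi = Δj = Δ decreases, the dictator's optimal kept share s* on [0,1] weakly increases. -/
import Mathlib


noncomputable def Ubar (a b T Wi Wj Di Dj s : ℝ) : ℝ :=
  a * (Wi + s * T)
    - b * (((Wi - Wj + 2 * s * T - T) / 2) ^ 2 + ((Di - Dj + 2 * s * T - T) / 2) ^ 2)

noncomputable def Uhat (a b T eta Wi Wj Di Dj s : ℝ) : ℝ :=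
  Ubar a b T Wi Wj Di Dj s + a * eta * (Di + s * T)

noncomputable def Udict (a b T eta Wi Wj Di Dj s : ℝ) : ℝ :=
  if Di + s * T < 0 then Uhat a b T eta Wi Wj Di Dj s else Ubar a b T Wi Wj Di Dj s

lemma Udict_eq (a b T eta Wi Wj D s : ℝ) :
    Udict a b T eta Wi Wj D D s
      = Ubar a b T Wi Wj 0 0 s + (a * eta) * min (D + s * T) 0 := by
  unfold Udict Uhat Ubar
  rcases lt_or_ge (D + s * T) 0 with h | h
  · rw [if_pos h, min_eq_left h.le]; ring
  · rw [if_neg (not_lt.mpr h), min_eq_right h]; ring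

lemma min_mid (x y : ℝ) : min x 0 + min y 0 ≤ 2 * min ((x + y) / 2) 0 := by
  simp only [min_def]
  split_ifs <;> linarith

lemma min_submod (u v x y : ℝ) (h1 : u ≤ x) (h2 : x ≤ v) (h3 : u ≤ y)
    (hsum : u + v = x + y) : min u 0 + min v 0 ≤ min x 0 + min y 0 := by
  simp only [min_def]
  split_ifs <;> linarith

lemma ubar_quad (a b T Wi Wj s s' : ℝ) :
    2 * Ubar a b T Wi Wj 0 0 ((s + s') / 2)
      = Ubar a b T Wi Wj 0 0 s + Ubar a b T Wi Wj 0 0 s' + b * T ^ 2 * (s - s') ^ 2 := by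
  unfold Ubar; ring

theorem stmt12 (a b T eta Wi Wj : ℝ)
    (ha : 0 < a) (hb : 0 < b) (hT : 0 < T) (heta0 : 0 ≤ eta) (heta1 : eta < 1)
    (sigma : ℝ → ℝ)
    (hmem : ∀ D : ℝ, 0 ≤ sigma D ∧ sigma D ≤ 1)
    (hmax : ∀ D : ℝ, ∀ s : ℝ, 0 ≤ s → s ≤ 1 →
      Udict a b T eta Wi Wj D D s ≤ Udict a b T eta Wi Wj D D (sigma D)) :
    ∀ D D' : ℝ, D ≤ D' → sigma D' ≤ sigma D := by
  intro D D' hDD'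
  by_contra hcon
  push_neg at hcon
  set s' := sigma D with hs'def
  set s := sigma D' with hsdef
  obtain ⟨hs'0, hs'1⟩ := hmem D
  obtain ⟨hs0, hs1⟩ := hmem D'
  have hc : (0:ℝ) ≤ a * eta := mul_nonneg ha.le heta0
  have h1 := hmax D s hs0 hs1
  have h2 := hmax D' s' hs'0 hs'1
  rw [Udict_eq, Udict_eq] at h1 h2
  have hsT : s' * T ≤ s * T := by nlinarith
  have hsub : min (D + s' * T) 0 + min (D' + s * T) 0
      ≤ min (D + s * T) 0 + min (D' + s' * T) 0 :=
    min_submod _ _ _ _ (by linarith) (by linarith) (by linarith) (by ring)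
  have hsubc : (a * eta) * min (D + s' * T) 0 + (a * eta) * min (D' + s * T) 0
      ≤ (a * eta) * min (D + s * T) 0 + (a * eta) * min (D' + s' * T) 0 := by
    have := mul_le_mul_of_nonneg_left hsub hc
    rw [mul_add, mul_add] at this
    exact this
  -- equality in the first-player optimality
  have heq1 : Ubar a b T Wi Wj 0 0 s + (a * eta) * min (D + s * T) 0
      = Ubar a b T Wi Wj 0 0 s' + (a * eta) * min (D + s' * T) 0 := by
    linarith
  -- midpoint
  have hm0 : (0:ℝ) ≤ (s + s') / 2 := by linarith
  have hm1 : (s + s') / 2 ≤ 1 := by linarith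
  have h3 := hmax D ((s + s') / 2) hm0 hm1
  rw [Udict_eq, Udict_eq] at h3
  have hmid : min (D + s * T) 0 + min (D + s' * T) 0
      ≤ 2 * min (D + (s + s') / 2 * T) 0 := by
    have h := min_mid (D + s * T) (D + s' * T)
    have he : (D + s * T + (D + s' * T)) / 2 = D + (s + s') / 2 * T := by ring
    rw [he] at h
    exact h
  have hmidc : (a * eta) * min (D + s * T) 0 + (a * eta) * min (D + s' * T) 0
      ≤ 2 * ((a * eta) * min (D + (s + s') / 2 * T) 0) := by
    have := mul_le_mul_of_nonneg_left hmid hc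
    rw [mul_add] at this
    linarith
  have hq := ubar_quad a b T Wi Wj s s'
  have hpos : 0 < b * T ^ 2 * (s - s') ^ 2 := by
    have h1 : (0:ℝ) < (s - s') ^ 2 := pow_pos (sub_pos.mpr hcon) 2
    positivity
  linarith
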